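/- arXiv:1910.08590 — 5 statements merged into one kernel-verified Lean document; each statement's English description precedes it below -/
import Mathlib

section
/- Let f' be defined by f'(x) = x/10 − 24.9 for x < −1, f'(x) = 25x for −1 ≤ x < 1, f'(x) = x/10 + 24.9 for x ≥ 1. Define the AA-GD update x_{k+1} = (f'(x_{k-1})·x_k − f'(x_k)·x_{k-1}) / (f'(x_{k-1}) − f'(x_k)) whenever f'(x_{k-1}) ≠ f'(x_k). If x_k ≥ 1 and x_{k-1} ≥ 1 with x_k ≠ x_{k-1}, then x_{k+1} = −249. -/
/-!
On `[1, ∞)` the gradient `fd` is the affine map `x ↦ x / 10 + 24.9`, and the AA-GD update with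
memory one is the secant step for `fd`. The secant step through two distinct points of the graph
of an affine map with nonzero slope lands exactly on its root, here `-249`.
-/

/-- The piecewise-linear gradient of the one-dimensional counterexample. -/
noncomputable def fd (x : ℝ) : ℝ :=
  if x < -1 then x / 10 - 24.9
  else if x < 1 then 25 * x
  else x / 10 + 24.9

lemma fd_of_one_le {x : ℝ} (hx : 1 ≤ x) : fd x = 1 / 10 * x + 24.9 := by
  rw [fd, if_neg (by linarith), if_neg (by linarith)]
  ring

section Affine

variable {a b x y : ℝ}

lemma affine_sub_affine_ne_zero (ha : a ≠ 0) (hxy : x ≠ y) :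
    (a * y + b) - (a * x + b) ≠ 0 := by
  have : a * (y - x) ≠ 0 := mul_ne_zero ha (sub_ne_zero.mpr hxy.symm)
  rwa [show (a * y + b) - (a * x + b) = a * (y - x) by ring]

lemma secant_step_affine_eq_root (ha : a ≠ 0) (hxy : x ≠ y) :
    ((a * y + b) * x - (a * x + b) * y) / ((a * y + b) - (a * x + b)) = -b / a := by
  rw [div_eq_div_iff (affine_sub_affine_ne_zero ha hxy) ha]
  ring

end Affine

theorem stmt_2 (xk xkm : ℝ) (hk : 1 ≤ xk) (hkm : 1 ≤ xkm) (hne : xk ≠ xkm) :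
    fd xkm ≠ fd xk ∧
    (fd xkm * xk - fd xk * xkm) / (fd xkm - fd xk) = -249 := by
  have hslope : (1 / 10 : ℝ) ≠ 0 := by norm_num
  rw [fd_of_one_le hk, fd_of_one_le hkm]
  refine ⟨sub_ne_zero.mp (affine_sub_affine_ne_zero hslope hne), ?_⟩
  rw [secant_step_affine_eq_root hslope hne]
  norm_num
end

section
/- With f' as in the one-dimensional counterexample, if x_k ≤ −1 and x_{k-1} ≤ −1 with x_k ≠ x_{k-1}, then the AA-GD update x_{k+1} = (f'(x_{k-1})·x_k − f'(x_k)·x_{k-1}) / (f'(x_{k-1}) − f'(x_k)) equals +249. -/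
lemma fd_of_le_neg_one {x : ℝ} (hx : x ≤ -1) : fd x = 1 / 10 * x + -24.9 := by
  rcases hx.lt_or_eq with hx | rfl
  · simp only [fd, hx, if_true]
    ring
  · norm_num [fd]

lemma secant_step_eq_root_of_affine {g : ℝ → ℝ} {a b x y : ℝ} (ha : a ≠ 0)
    (hx : g x = a * x + b) (hy : g y = a * y + b) (hxy : x ≠ y) :
    g y ≠ g x ∧ (g y * x - g x * y) / (g y - g x) = -b / a := by
  have hdiff : g y - g x = a * (y - x) := by rw [hx, hy]; ring
  have hdiff_ne : g y - g x ≠ 0 := by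
    rw [hdiff]
    exact mul_ne_zero ha (sub_ne_zero.mpr hxy.symm)
  refine ⟨sub_ne_zero.mp hdiff_ne, ?_⟩
  rw [div_eq_div_iff hdiff_ne ha, hdiff, hx, hy]
  ring

theorem stmt_3 (xk xkm : ℝ) (hk : xk ≤ -1) (hkm : xkm ≤ -1) (hne : xk ≠ xkm) :
    fd xkm ≠ fd xk ∧
    (fd xkm * xk - fd xk * xkm) / (fd xkm - fd xk) = 249 := by
  have h := secant_step_eq_root_of_affine (by norm_num) (fd_of_le_neg_one hk)
    (fd_of_le_neg_one hkm) hne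
  norm_num at h
  exact h
end

section
/- Let g : ℝⁿ → ℝⁿ satisfy g(y⋆) = y⋆ and be differentiable at y⋆ with Jacobian G, ρ := ‖G‖₂ < 1. Fix m ∈ ℕ, a bound M ≥ 1 on the ℓ¹-norms of the extrapolation coefficients, and ρ̂ ∈ (ρ, 1). Then there exists r > 0 such that: for any sequence (y_k) with y₀ ∈ B(y⋆, r), y₁ = g(y₀), and y_{k+1} = Σ_{i=0}^{m_k} α_i^k g(y_{k−i}) where m_k = min(m,k), Σ_i α_i^k = 1, ‖α^k‖₁ ≤ M, and ‖Σ_i α_i^k F(y_{k−i})‖ ≤ ‖F(y_k)‖ with F(y) = g(y) − y, it holds that ‖F(y_k)‖ ≤ ρ̂^k ‖F(y₀)‖ for all k. -/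
/-!
Write `F y = g y - y` and `Δ z = g z - y⋆ - G (z - y⋆)` for the linearization error, so that
`‖Δ z‖ ≤ ε ‖z - y⋆‖` near `y⋆`. Near `y⋆` the residual controls the error,
`(1 - ρ - ε) ‖z - y⋆‖ ≤ ‖F z‖`, and for an affine combination `y' = ∑ αᵢ g(zᵢ)` one has the exact
identity `F y' = G (∑ αᵢ F zᵢ) - ∑ αᵢ Δ zᵢ + Δ y'`. Hence if the last `m + 1` residuals are at
most `β`, then `‖F y'‖ ≤ ρ ‖∑ αᵢ F zᵢ‖ + O(ε M β)`. By induction with `β = ρ̂^(k-m) ‖F y₀‖`, the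
residuals decay like `ρ̂^k` as soon as `ε` is small compared with `(ρ̂ - ρ) ρ̂^m / M`, and the
iterates stay in the ball where the linearization is `ε`-accurate provided `y₀` starts close enough.
-/

open Topology Finset

theorem sum_smul_sub_of_sum_eq_one {R V ι : Type*} [Ring R] [AddCommGroup V] [Module R V]
    {s : Finset ι} {α : ι → R} (v : ι → V) (x : V) (hα : ∑ i ∈ s, α i = 1) :
    ∑ i ∈ s, α i • v i - x = ∑ i ∈ s, α i • (v i - x) := by
  simp only [smul_sub, sum_sub_distrib, ← sum_smul, hα, one_smul]

theorem pow_sub_le_pow_div_pow {a : ℝ} (ha0 : 0 < a) (ha1 : a ≤ 1) {i j m : ℕ} (hij : i ≤ j)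
    (him : i ≤ m) : a ^ (j - i) ≤ a ^ j / a ^ m := by
  rw [le_div_iff₀ (pow_pos ha0 m)]
  calc a ^ (j - i) * a ^ m ≤ a ^ (j - i) * a ^ i :=
        mul_le_mul_of_nonneg_left (pow_le_pow_of_le_one ha0.le ha1 him) (by positivity)
    _ = a ^ j := by rw [← pow_add, Nat.sub_add_cancel hij]

theorem exists_pos_lt_sub_and_add_mul_div_le {ρ ρhat : ℝ} (K : ℝ) (h : ρ < ρhat) (h1 : ρ < 1) :
    ∃ ε > 0, ε < 1 - ρ ∧ ρ + K * ε / (1 - ρ - ε) ≤ ρhat := by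
  have hcont : ContinuousAt (fun ε => ρ + K * ε / (1 - ρ - ε)) 0 :=
    continuousAt_const.add <| (continuousAt_const.mul continuousAt_id).div
      (continuousAt_const.sub continuousAt_id) (by simp; linarith)
  have hlt : ∀ᶠ ε in 𝓝 0, ρ + K * ε / (1 - ρ - ε) < ρhat :=
    hcont.eventually (gt_mem_nhds (by simpa using h))
  have hsmall : ∀ᶠ ε in 𝓝 (0 : ℝ), ε < 1 - ρ := gt_mem_nhds (by linarith)
  obtain ⟨ε, ⟨hε1, hε2⟩, hε0⟩ :=
    (((hsmall.and hlt).filter_mono nhdsWithin_le_nhds).and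
      (self_mem_nhdsWithin : ∀ᶠ ε in 𝓝[>] (0 : ℝ), 0 < ε)).exists
  exact ⟨ε, hε0, hε1, hε2.le⟩

section NormedSpace

variable {E : Type*} [NormedAddCommGroup E] [NormedSpace ℝ E]

theorem norm_sum_smul_le_mul {ι : Type*} {s : Finset ι} {α : ι → ℝ} {v : ι → E} {M B : ℝ}
    (hα : ∑ i ∈ s, |α i| ≤ M) (hv : ∀ i ∈ s, ‖v i‖ ≤ B) (hB : 0 ≤ B) :
    ‖∑ i ∈ s, α i • v i‖ ≤ M * B :=
  calc ‖∑ i ∈ s, α i • v i‖ ≤ ∑ i ∈ s, |α i| * B :=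
        (norm_sum_le _ _).trans <| sum_le_sum fun i hi => by
          rw [norm_smul, Real.norm_eq_abs]
          exact mul_le_mul_of_nonneg_left (hv i hi) (abs_nonneg _)
    _ = (∑ i ∈ s, |α i|) * B := (sum_mul _ _ _).symm
    _ ≤ M * B := mul_le_mul_of_nonneg_right hα hB

theorem HasFDerivAt.exists_pos_norm_sub_le {F : Type*} [NormedAddCommGroup F] [NormedSpace ℝ F]
    {g : E → F} {G : E →L[ℝ] F} {x : E} (hg : HasFDerivAt g G x) {ε : ℝ} (hε : 0 < ε) :
    ∃ R > 0, ∀ z, ‖z - x‖ ≤ R → ‖g z - g x - G (z - x)‖ ≤ ε * ‖z - x‖ := by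
  obtain ⟨R, hR, h⟩ := Metric.nhds_basis_closedBall.eventually_iff.1 (hg.isLittleO.def hε)
  exact ⟨R, hR, fun z hz => h (mem_closedBall_iff_norm.2 hz)⟩

variable {g : E → E} {G : E →L[ℝ] E} {x z : E} {ρ ε R : ℝ}

theorem map_sub_self_eq_of_sub_eq {ι : Type*} {s : Finset ι} {α : ι → ℝ} {w : ι → E} {y : E}
    (hy : y - x = ∑ i ∈ s, α i • (g (w i) - x)) :
    g y - y = G (∑ i ∈ s, α i • (g (w i) - w i))
      - ∑ i ∈ s, α i • (g (w i) - x - G (w i - x)) + (g y - x - G (y - x)) := by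
  have hterm : ∀ v, G (g v - x) - (g v - x) = G (g v - v) - (g v - x - G (v - x)) := fun v => by
    simp only [map_sub]; abel
  calc g y - y = G (y - x) - (y - x) + (g y - x - G (y - x)) := by abel
    _ = _ := by
      simp only [hy, map_sum, map_smul, ← smul_sub, ← sum_sub_distrib, hterm]

theorem norm_map_sub_le_of_linearization
    (hlin : ∀ z, ‖z - x‖ ≤ R → ‖g z - x - G (z - x)‖ ≤ ε * ‖z - x‖) (hG : ‖G‖ ≤ ρ)
    (hz : ‖z - x‖ ≤ R) : ‖g z - x‖ ≤ (ρ + ε) * ‖z - x‖ :=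
  calc ‖g z - x‖ = ‖G (z - x) + (g z - x - G (z - x))‖ := by rw [add_sub_cancel]
    _ ≤ ‖G (z - x)‖ + ‖g z - x - G (z - x)‖ := norm_add_le _ _
    _ ≤ ρ * ‖z - x‖ + ε * ‖z - x‖ := add_le_add (G.le_of_opNorm_le hG _) (hlin z hz)
    _ = (ρ + ε) * ‖z - x‖ := (add_mul _ _ _).symm

theorem norm_map_sub_self_le_two_mul
    (hlin : ∀ z, ‖z - x‖ ≤ R → ‖g z - x - G (z - x)‖ ≤ ε * ‖z - x‖) (hG : ‖G‖ ≤ ρ)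
    (hρε : ρ + ε ≤ 1) (hz : ‖z - x‖ ≤ R) : ‖g z - z‖ ≤ 2 * ‖z - x‖ := by
  have hgz := norm_map_sub_le_of_linearization hlin hG hz
  have hcontr : (ρ + ε) * ‖z - x‖ ≤ 1 * ‖z - x‖ := mul_le_mul_of_nonneg_right hρε (norm_nonneg _)
  have htri := norm_sub_le_norm_sub_add_norm_sub (g z) x z
  rw [norm_sub_rev x z] at htri
  linarith

theorem norm_sub_le_norm_map_sub_self_div
    (hlin : ∀ z, ‖z - x‖ ≤ R → ‖g z - x - G (z - x)‖ ≤ ε * ‖z - x‖) (hG : ‖G‖ ≤ ρ)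
    (hc : 0 < 1 - ρ - ε) (hz : ‖z - x‖ ≤ R) : ‖z - x‖ ≤ ‖g z - z‖ / (1 - ρ - ε) := by
  have hgz := norm_map_sub_le_of_linearization hlin hG hz
  have htri := norm_sub_le_norm_sub_add_norm_sub z (g z) x
  rw [norm_sub_rev z (g z)] at htri
  rw [le_div_iff₀ hc]
  linarith

section AffineStep

variable {ι : Type*} {s : Finset ι} {α : ι → ℝ} {w : ι → E} {y : E} {M β : ℝ}

theorem norm_affine_step_sub_le
    (hlin : ∀ z, ‖z - x‖ ≤ R → ‖g z - x - G (z - x)‖ ≤ ε * ‖z - x‖) (hG : ‖G‖ ≤ ρ)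
    (hc : 0 < 1 - ρ - ε) (hy : y = ∑ i ∈ s, α i • g (w i)) (hα1 : ∑ i ∈ s, α i = 1)
    (hαM : ∑ i ∈ s, |α i| ≤ M) (hw : ∀ i ∈ s, ‖w i - x‖ ≤ R ∧ ‖g (w i) - w i‖ ≤ β)
    (hβ : 0 ≤ β) : ‖y - x‖ ≤ M * (β / (1 - ρ - ε)) := by
  rw [hy, sum_smul_sub_of_sum_eq_one _ _ hα1]
  refine norm_sum_smul_le_mul hαM (fun i hi => ?_) (by positivity)
  obtain ⟨hwR, hwF⟩ := hw i hi
  calc ‖g (w i) - x‖ ≤ (ρ + ε) * ‖w i - x‖ := norm_map_sub_le_of_linearization hlin hG hwR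
    _ ≤ 1 * ‖w i - x‖ := mul_le_mul_of_nonneg_right (by linarith) (norm_nonneg _)
    _ ≤ β / (1 - ρ - ε) := by
      rw [one_mul]
      exact (norm_sub_le_norm_map_sub_self_div hlin hG hc hwR).trans (by gcongr)

theorem norm_affine_step_residual_le
    (hlin : ∀ z, ‖z - x‖ ≤ R → ‖g z - x - G (z - x)‖ ≤ ε * ‖z - x‖) (hG : ‖G‖ ≤ ρ)
    (hε : 0 ≤ ε) (hc : 0 < 1 - ρ - ε) (hy : y = ∑ i ∈ s, α i • g (w i))
    (hα1 : ∑ i ∈ s, α i = 1) (hαM : ∑ i ∈ s, |α i| ≤ M)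
    (hw : ∀ i ∈ s, ‖w i - x‖ ≤ R ∧ ‖g (w i) - w i‖ ≤ β) (hβ : 0 ≤ β) (hyR : ‖y - x‖ ≤ R) :
    ‖g y - y‖ ≤ ρ * ‖∑ i ∈ s, α i • (g (w i) - w i)‖ + 2 * ε * (M * (β / (1 - ρ - ε))) := by
  have hyx : y - x = ∑ i ∈ s, α i • (g (w i) - x) := by
    rw [hy, sum_smul_sub_of_sum_eq_one _ _ hα1]
  have hlinear := G.le_of_opNorm_le hG (∑ i ∈ s, α i • (g (w i) - w i))
  have herr : ‖∑ i ∈ s, α i • (g (w i) - x - G (w i - x))‖ ≤ M * (ε * (β / (1 - ρ - ε))) := by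
    refine norm_sum_smul_le_mul hαM (fun i hi => ?_) (by positivity)
    obtain ⟨hwR, hwF⟩ := hw i hi
    calc ‖g (w i) - x - G (w i - x)‖ ≤ ε * ‖w i - x‖ := hlin _ hwR
      _ ≤ ε * (β / (1 - ρ - ε)) := by
        gcongr
        exact (norm_sub_le_norm_map_sub_self_div hlin hG hc hwR).trans (by gcongr)
  have herr_new : ‖g y - x - G (y - x)‖ ≤ ε * (M * (β / (1 - ρ - ε))) :=
    (hlin y hyR).trans <| by
      gcongr; exact norm_affine_step_sub_le hlin hG hc hy hα1 hαM hw hβ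
  rw [map_sub_self_eq_of_sub_eq hyx]
  refine (norm_add_le _ _).trans <| ((add_le_add_left (norm_sub_le _ _) _).trans ?_)
  calc _ ≤ ρ * ‖∑ i ∈ s, α i • (g (w i) - w i)‖ + M * (ε * (β / (1 - ρ - ε)))
        + ε * (M * (β / (1 - ρ - ε))) := add_le_add (add_le_add hlinear herr) herr_new
    _ = _ := by ring

end AffineStep

structure IsAndersonIteration (g : E → E) (m : ℕ) (M : ℝ) (y : ℕ → E) (α : ℕ → ℕ → ℝ) :
    Prop where
  step : ∀ k, y (k + 1) = ∑ i ∈ range (min m k + 1), α k i • g (y (k - i))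
  sum_eq_one : ∀ k, ∑ i ∈ range (min m k + 1), α k i = 1
  sum_abs_le : ∀ k, ∑ i ∈ range (min m k + 1), |α k i| ≤ M
  norm_residual_le : ∀ k,
    ‖∑ i ∈ range (min m k + 1), α k i • (g (y (k - i)) - y (k - i))‖ ≤ ‖g (y k) - y k‖

namespace IsAndersonIteration

variable {m : ℕ} {M ρhat : ℝ} {y : ℕ → E} {α : ℕ → ℕ → ℝ}

/-- The plain fixed-point step `y 1 = g (y 0)` is the Anderson step with coefficients `(1)`. -/
theorem of_succ (hM : 1 ≤ M) (hy1 : y 1 = g (y 0))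
    (hstep : ∀ k, 1 ≤ k → y (k + 1) = ∑ i ∈ range (min m k + 1), α k i • g (y (k - i)))
    (hsum : ∀ k, 1 ≤ k → ∑ i ∈ range (min m k + 1), α k i = 1)
    (habs : ∀ k, 1 ≤ k → ∑ i ∈ range (min m k + 1), |α k i| ≤ M)
    (hres : ∀ k, 1 ≤ k →
      ‖∑ i ∈ range (min m k + 1), α k i • (g (y (k - i)) - y (k - i))‖ ≤ ‖g (y k) - y k‖) :
    IsAndersonIteration g m M y (fun k => if k = 0 then Pi.single 0 1 else α k) where
  step k := by
    rcases k with _ | k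
    · simp [hy1]
    · simpa using hstep (k + 1) (by omega)
  sum_eq_one k := by
    rcases k with _ | k
    · simp
    · simpa using hsum (k + 1) (by omega)
  sum_abs_le k := by
    rcases k with _ | k
    · simpa using hM
    · simpa using habs (k + 1) (by omega)
  norm_residual_le k := by
    rcases k with _ | k
    · simp
    · simpa using hres (k + 1) (by omega)

theorem norm_sub_le_and_norm_residual_le (hy : IsAndersonIteration g m M y α)
    (hlin : ∀ z, ‖z - x‖ ≤ R → ‖g z - x - G (z - x)‖ ≤ ε * ‖z - x‖) (hG : ‖G‖ ≤ ρ)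
    (hε : 0 ≤ ε) (hc : 0 < 1 - ρ - ε) (hρhat0 : 0 < ρhat) (hρhat1 : ρhat ≤ 1)
    (hcontr : ρ + 2 * M / ρhat ^ m * ε / (1 - ρ - ε) ≤ ρhat) (h0 : ‖y 0 - x‖ ≤ R)
    (hN : M / ρhat ^ m * ‖g (y 0) - y 0‖ / (1 - ρ - ε) ≤ R) (k : ℕ) :
    ‖y k - x‖ ≤ R ∧ ‖g (y k) - y k‖ ≤ ρhat ^ k * ‖g (y 0) - y 0‖ := by
  set N := ‖g (y 0) - y 0‖
  set c := 1 - ρ - ε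
  have hM : 0 ≤ M := (sum_nonneg fun i _ => abs_nonneg _).trans (hy.sum_abs_le 0)
  have hρ : 0 ≤ ρ := (norm_nonneg G).trans hG
  induction k using Nat.strong_induction_on with
  | _ k ih =>
  rcases k with _ | j
  · exact ⟨h0, by simp [N]⟩
  set β := ρhat ^ j * N / ρhat ^ m
  have hβ : 0 ≤ β := by positivity
  have hwindow : ∀ i ∈ range (min m j + 1),
      ‖y (j - i) - x‖ ≤ R ∧ ‖g (y (j - i)) - y (j - i)‖ ≤ β := by
    intro i hi
    have hi : i ≤ min m j := Nat.lt_succ_iff.1 (mem_range.1 hi)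
    obtain ⟨hR, hres⟩ := ih (j - i) (by omega)
    refine ⟨hR, hres.trans ?_⟩
    calc ρhat ^ (j - i) * N ≤ ρhat ^ j / ρhat ^ m * N :=
          mul_le_mul_of_nonneg_right
            (pow_sub_le_pow_div_pow hρhat0 hρhat1 (by omega) (by omega)) (norm_nonneg _)
      _ = β := div_mul_eq_mul_div _ _ _
  have hR : ‖y (j + 1) - x‖ ≤ R := by
    refine (norm_affine_step_sub_le (w := fun i => y (j - i)) hlin hG hc (hy.step j)
      (hy.sum_eq_one j) (hy.sum_abs_le j) hwindow hβ).trans ?_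
    calc M * (β / c) = ρhat ^ j * (M / ρhat ^ m * N / c) := by ring
      _ ≤ 1 * (M / ρhat ^ m * N / c) :=
          mul_le_mul_of_nonneg_right (pow_le_one₀ hρhat0.le hρhat1) (by positivity)
      _ ≤ R := by rwa [one_mul]
  refine ⟨hR, ?_⟩
  have hcomb := (hy.norm_residual_le j).trans (ih j (by omega)).2
  calc ‖g (y (j + 1)) - y (j + 1)‖ ≤ ρ * (ρhat ^ j * N) + 2 * ε * (M * (β / c)) :=
        (norm_affine_step_residual_le (w := fun i => y (j - i)) hlin hG hε hc (hy.step j)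
          (hy.sum_eq_one j) (hy.sum_abs_le j) hwindow hβ hR).trans (by gcongr)
    _ = (ρ + 2 * M / ρhat ^ m * ε / c) * (ρhat ^ j * N) := by
        simp only [β]; field_simp
    _ ≤ ρhat * (ρhat ^ j * N) := by gcongr
    _ = ρhat ^ (j + 1) * N := by ring

end IsAndersonIteration

end NormedSpace

theorem stmt_11 (n : ℕ) (g : EuclideanSpace ℝ (Fin n) → EuclideanSpace ℝ (Fin n))
    (ystar : EuclideanSpace ℝ (Fin n))
    (G : EuclideanSpace ℝ (Fin n) →L[ℝ] EuclideanSpace ℝ (Fin n))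
    (hderiv : HasFDerivAt g G ystar) (hfix : g ystar = ystar)
    (ρ : ℝ) (hρ : ‖G‖ = ρ) (hρ1 : ρ < 1)
    (m : ℕ) (M : ℝ) (hM : 1 ≤ M) (ρhat : ℝ) (hρhat : ρhat ∈ Set.Ioo ρ 1) :
    ∃ r > 0, ∀ (y : ℕ → EuclideanSpace ℝ (Fin n)) (α : ℕ → ℕ → ℝ),
      ‖y 0 - ystar‖ < r →
      y 1 = g (y 0) →
      (∀ k, 1 ≤ k →
        y (k + 1) = ∑ i ∈ Finset.range (min m k + 1), α k i • g (y (k - i))) →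
      (∀ k, 1 ≤ k → ∑ i ∈ Finset.range (min m k + 1), α k i = 1) →
      (∀ k, 1 ≤ k → ∑ i ∈ Finset.range (min m k + 1), |α k i| ≤ M) →
      (∀ k, 1 ≤ k →
        ‖∑ i ∈ Finset.range (min m k + 1), α k i • (g (y (k - i)) - y (k - i))‖
          ≤ ‖g (y k) - y k‖) →
      ∀ k, ‖g (y k) - y k‖ ≤ ρhat ^ k * ‖g (y 0) - y 0‖ := by
  obtain ⟨hρρhat, hρhat1⟩ := hρhat
  have hρhat0 : 0 < ρhat := (hρ ▸ norm_nonneg G).trans_lt hρρhat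
  have hM0 : 0 < M := one_pos.trans_le hM
  obtain ⟨ε, hε0, hερ, hcontr⟩ := exists_pos_lt_sub_and_add_mul_div_le (2 * M / ρhat ^ m) hρρhat hρ1
  obtain ⟨R, hR0, hlin⟩ := hderiv.exists_pos_norm_sub_le hε0
  rw [hfix] at hlin
  have hc : 0 < 1 - ρ - ε := by linarith
  refine ⟨min R (ρhat ^ m * (1 - ρ - ε) * R / (2 * M)), by positivity, ?_⟩
  intro y α h0 hy1 hstep hsum habs hres k
  have h0R : ‖y 0 - ystar‖ ≤ R := h0.le.trans (min_le_left _ _)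
  have hN : M / ρhat ^ m * ‖g (y 0) - y 0‖ / (1 - ρ - ε) ≤ R :=
    calc M / ρhat ^ m * ‖g (y 0) - y 0‖ / (1 - ρ - ε)
        ≤ M / ρhat ^ m * (2 * (ρhat ^ m * (1 - ρ - ε) * R / (2 * M))) / (1 - ρ - ε) := by
          gcongr
          exact (norm_map_sub_self_le_two_mul hlin hρ.le (by linarith) h0R).trans
            (by gcongr; exact h0.le.trans (min_le_right _ _))
      _ = R := by field_simp
  exact ((IsAndersonIteration.of_succ hM hy1 hstep hsum habs hres).norm_sub_le_and_norm_residual_le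
    hlin hρ.le hε0.le hc hρhat0 hρhat1.le hcontr h0R hN k).2
end

section
/- Under the hypotheses of the local Anderson acceleration convergence theorem (g differentiable at its fixed point y⋆, ρ = ‖G‖₂ < 1, coefficients affinely constrained with ℓ¹-bound M, ρ̂ ∈ (ρ,1), y₀ sufficiently close to y⋆), the iterates satisfy ‖y_k − y⋆‖ ≤ ((1+ρ)/(1−ρ)) ρ̂^k ‖y₀ − y⋆‖ for all k, and consequently limsup_{k→∞} (‖y_k − y⋆‖ / ‖y₀ − y⋆‖)^{1/k} ≤ ρ̂. -/
/-!
Write `g z = x₀ + G (z - x₀) + e z` with `‖e z‖ ≤ ε ‖z - x₀‖` near the fixed point `x₀`. The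
residual `F z = g z - z` is then comparable with the error,
`(1 - ρ - ε) ‖z - x₀‖ ≤ ‖F z‖ ≤ (1 + ρ + ε) ‖z - x₀‖`. Since the coefficients sum to one, the
residual of the new iterate is `G` applied to the mixed residual `∑ α i • F (y (k - i))`, up to
linearization errors of size `ε M` times the errors in the window, and the mixed residual is at
most `‖F (y k)‖`. So for `q ∈ (ρ, ρ̂)` and `ε` small a strong induction keeps the iterates in the
ball and gives `‖F (y k)‖ ≤ q ^ k ‖F (y 0)‖`. Going back through the two-sided bound costs the
factor `(1 + ρ + ε) / (1 - ρ - ε)`, which the gap `q < ρ̂` absorbs into `(1 + ρ) / (1 - ρ)`; the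
bound on `k`-th roots follows because `C ^ (1 / k) → 1`.
-/

open Filter Finset Metric Topology

theorem norm_sum_smul_le {ι E : Type*} [SeminormedAddCommGroup E] [NormedSpace ℝ E]
    (s : Finset ι) (a : ι → ℝ) (v : ι → E) {D : ℝ} (hv : ∀ i ∈ s, ‖v i‖ ≤ D) :
    ‖∑ i ∈ s, a i • v i‖ ≤ (∑ i ∈ s, |a i|) * D :=
  calc ‖∑ i ∈ s, a i • v i‖ ≤ ∑ i ∈ s, |a i| * ‖v i‖ := by
        simpa only [norm_smul, Real.norm_eq_abs] using norm_sum_le s (fun i => a i • v i)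
    _ ≤ ∑ i ∈ s, |a i| * D := sum_le_sum fun i hi => by gcongr; exact hv i hi
    _ = (∑ i ∈ s, |a i|) * D := (sum_mul _ _ _).symm

theorem limsup_rpow_one_div_le_of_le_mul_pow {u : ℕ → ℝ} {C p : ℝ} (hu0 : ∀ k, 0 ≤ u k)
    (hC : 0 < C) (hp : 0 ≤ p) (hu : ∀ k, u k ≤ C * p ^ k) :
    limsup (fun k : ℕ => u k ^ ((1 : ℝ) / k)) atTop ≤ p := by
  have hroot : ∀ k : ℕ, k ≠ 0 → u k ^ ((1 : ℝ) / k) ≤ C ^ ((1 : ℝ) / k) * p := by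
    intro k hk
    calc u k ^ ((1 : ℝ) / k) ≤ (C * p ^ k) ^ ((1 : ℝ) / k) :=
          Real.rpow_le_rpow (hu0 k) (hu k) (by positivity)
      _ = C ^ ((1 : ℝ) / k) * p := by
        rw [Real.mul_rpow hC.le (by positivity), one_div, Real.pow_rpow_inv_natCast hp hk]
  have hlim : Tendsto (fun k : ℕ => C ^ ((1 : ℝ) / k) * p) atTop (𝓝 p) := by
    simpa using ((Real.continuousAt_const_rpow hC.ne').tendsto.comp
      tendsto_one_div_atTop_nhds_zero_nat).mul_const p
  exact limsup_le_limsup (eventually_atTop.2 ⟨1, fun k hk => hroot k (by omega)⟩)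
    (isBoundedUnder_of ⟨0, fun k => Real.rpow_nonneg (hu0 k) _⟩).isCoboundedUnder_le
    hlim.isBoundedUnder_le |>.trans_eq hlim.limsup_eq

theorem exists_local_convergence_constants {ρ q p M : ℝ} (m : ℕ) (hM : 0 < M) (hρ0 : 0 ≤ ρ)
    (hρq : ρ < q) (hq1 : q < 1) (hqp : q < p) :
    ∃ ε > 0, ∃ K > 0, 0 < 1 - ρ - ε ∧ M ≤ K * ((1 - ρ - ε) * q ^ m) ∧ ρ + 2 * ε * K ≤ q ∧
      (1 + ρ + ε) * q ≤ (1 + ρ) / (1 - ρ) * (1 - ρ - ε) * p := by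
  have hden : 0 < (1 - ρ) * q ^ m := mul_pos (by linarith) (pow_pos (hρ0.trans_lt hρq) m)
  set K := 2 * M / ((1 - ρ) * q ^ m)
  have hK : K * ((1 - ρ) * q ^ m) = 2 * M := div_mul_cancel₀ _ hden.ne'
  -- With `K` fixed, each condition is continuous in `ε` and holds strictly at `ε = 0`.
  have h1 : ∀ᶠ ε in 𝓝 (0 : ℝ), 0 < 1 - ρ - ε :=
    ContinuousAt.eventually_lt (f := fun _ => 0) (by fun_prop) (by fun_prop)
      (by simpa using hρq.trans hq1)
  have h2 : ∀ᶠ ε in 𝓝 (0 : ℝ), M < K * ((1 - ρ - ε) * q ^ m) :=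
    ContinuousAt.eventually_lt (f := fun _ => M) (by fun_prop) (by fun_prop)
      (by simp only [sub_zero, hK]; linarith)
  have h3 : ∀ᶠ ε in 𝓝 (0 : ℝ), ρ + 2 * ε * K < q :=
    ContinuousAt.eventually_lt (by fun_prop) (by fun_prop) (by simpa using hρq)
  have h4 : ∀ᶠ ε in 𝓝 (0 : ℝ), (1 + ρ + ε) * q < (1 + ρ) / (1 - ρ) * (1 - ρ - ε) * p :=
    ContinuousAt.eventually_lt (by fun_prop) (by fun_prop) (by
      simp only [add_zero, sub_zero, div_mul_cancel₀ _ (sub_pos.2 (hρq.trans hq1)).ne']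
      exact mul_lt_mul_of_pos_left hqp (by linarith))
  obtain ⟨ε, ⟨hc, hK', hcontr, hfin⟩, hε⟩ :=
    (((h1.and (h2.and (h3.and h4))).filter_mono nhdsWithin_le_nhds).and
      (self_mem_nhdsWithin : ∀ᶠ ε in 𝓝[>] (0 : ℝ), 0 < ε)).exists
  exact ⟨ε, hε, K, div_pos (by linarith) hden, hc, hK'.le, hcontr.le, hfin.le⟩

section

variable {E : Type*} [NormedAddCommGroup E] [NormedSpace ℝ E]

structure IsAndersonIteration_s12 (g : E → E) (m : ℕ) (M : ℝ) (y : ℕ → E) (α : ℕ → ℕ → ℝ) :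
    Prop where
  succ_eq : ∀ k, y (k + 1) = ∑ i ∈ range (min m k + 1), α k i • g (y (k - i))
  sum_coeff : ∀ k, ∑ i ∈ range (min m k + 1), α k i = 1
  sum_abs_coeff_le : ∀ k, ∑ i ∈ range (min m k + 1), |α k i| ≤ M
  norm_sum_residual_le : ∀ k,
    ‖∑ i ∈ range (min m k + 1), α k i • (g (y (k - i)) - y (k - i))‖ ≤ ‖g (y k) - y k‖

theorem residual_eq_linearization (g : E → E) (G : E →L[ℝ] E) (x₀ z : E) :
    g z - z = G (z - x₀) - (z - x₀) + (g z - x₀ - G (z - x₀)) := by abel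

variable {g : E → E} {G : E →L[ℝ] E} {x₀ z : E} {ε : ℝ}

theorem mul_norm_sub_le_norm_residual (he : ‖g z - x₀ - G (z - x₀)‖ ≤ ε * ‖z - x₀‖) :
    (1 - ‖G‖ - ε) * ‖z - x₀‖ ≤ ‖g z - z‖ := by
  have hsplit : z - x₀ = G (z - x₀) + (g z - x₀ - G (z - x₀)) - (g z - z) := by abel
  have hnorm : ‖z - x₀‖ ≤ ‖G‖ * ‖z - x₀‖ + ε * ‖z - x₀‖ + ‖g z - z‖ :=
    calc ‖z - x₀‖ ≤ ‖G (z - x₀)‖ + ‖g z - x₀ - G (z - x₀)‖ + ‖g z - z‖ := by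
          conv_lhs => rw [hsplit]
          exact (norm_sub_le _ _).trans (by gcongr; exact norm_add_le _ _)
      _ ≤ _ := by gcongr; exact G.le_opNorm _
  linarith

theorem norm_residual_le_mul_norm_sub (he : ‖g z - x₀ - G (z - x₀)‖ ≤ ε * ‖z - x₀‖) :
    ‖g z - z‖ ≤ (1 + ‖G‖ + ε) * ‖z - x₀‖ := by
  rw [residual_eq_linearization g G x₀ z]
  calc _ ≤ ‖G (z - x₀)‖ + ‖z - x₀‖ + ‖g z - x₀ - G (z - x₀)‖ :=
        (norm_add_le _ _).trans (by gcongr; exact norm_sub_le _ _)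
    _ ≤ ‖G‖ * ‖z - x₀‖ + ‖z - x₀‖ + ε * ‖z - x₀‖ := by gcongr; exact G.le_opNorm _
    _ = (1 + ‖G‖ + ε) * ‖z - x₀‖ := by ring

variable {ι : Type*} {s : Finset ι} {a : ι → ℝ} {zs : ι → E} {M D : ℝ}

theorem sum_smul_sub_eq_linearization (hsum : ∑ i ∈ s, a i = 1) :
    ∑ i ∈ s, a i • g (zs i) - x₀ =
      G (∑ i ∈ s, a i • (zs i - x₀)) + ∑ i ∈ s, a i • (g (zs i) - x₀ - G (zs i - x₀)) := by
  have hx₀ : x₀ = ∑ i ∈ s, a i • x₀ := by rw [← sum_smul, hsum, one_smul]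
  rw [map_sum, ← sum_add_distrib]
  nth_rewrite 1 [hx₀]
  rw [← sum_sub_distrib]
  refine sum_congr rfl fun i _ => ?_
  rw [map_smul, ← smul_add, ← smul_sub, add_sub_cancel]

theorem sum_smul_residual_eq_linearization :
    ∑ i ∈ s, a i • (g (zs i) - zs i) =
      G (∑ i ∈ s, a i • (zs i - x₀)) - ∑ i ∈ s, a i • (zs i - x₀) +
        ∑ i ∈ s, a i • (g (zs i) - x₀ - G (zs i - x₀)) := by
  rw [map_sum, ← sum_sub_distrib, ← sum_add_distrib]
  refine sum_congr rfl fun i _ => ?_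
  rw [map_smul, ← smul_sub, ← smul_add, residual_eq_linearization g G x₀ (zs i)]

theorem norm_sum_smul_sub_le (hsum : ∑ i ∈ s, a i = 1) (habs : ∑ i ∈ s, |a i| ≤ M)
    (hε : 0 ≤ ε) (hD : ∀ i ∈ s, ‖zs i - x₀‖ ≤ D)
    (he : ∀ i ∈ s, ‖g (zs i) - x₀ - G (zs i - x₀)‖ ≤ ε * ‖zs i - x₀‖) :
    ‖∑ i ∈ s, a i • g (zs i) - x₀‖ ≤ (‖G‖ + ε) * (M * D) := by
  obtain ⟨i₀, hi₀⟩ := nonempty_of_sum_ne_zero (hsum.trans_ne one_ne_zero)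
  have hD0 : 0 ≤ D := (norm_nonneg _).trans (hD i₀ hi₀)
  have hw := norm_sum_smul_le s a _ hD
  have hE := norm_sum_smul_le s a _ fun i hi =>
    (he i hi).trans (mul_le_mul_of_nonneg_left (hD i hi) hε)
  rw [sum_smul_sub_eq_linearization hsum]
  calc _ ≤ ‖G‖ * ‖∑ i ∈ s, a i • (zs i - x₀)‖ + ‖∑ i ∈ s, a i • (g (zs i) - x₀ - G (zs i - x₀))‖ :=
        (norm_add_le _ _).trans (by gcongr; exact G.le_opNorm _)
    _ ≤ ‖G‖ * ((∑ i ∈ s, |a i|) * D) + (∑ i ∈ s, |a i|) * (ε * D) := by gcongr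
    _ ≤ ‖G‖ * (M * D) + M * (ε * D) := by gcongr
    _ = (‖G‖ + ε) * (M * D) := by ring

theorem norm_residual_sum_smul_le (hsum : ∑ i ∈ s, a i = 1) (habs : ∑ i ∈ s, |a i| ≤ M)
    (hε : 0 ≤ ε) (hD : ∀ i ∈ s, ‖zs i - x₀‖ ≤ D)
    (he : ∀ i ∈ s, ‖g (zs i) - x₀ - G (zs i - x₀)‖ ≤ ε * ‖zs i - x₀‖)
    (y' : E) (hy' : y' = ∑ i ∈ s, a i • g (zs i))
    (he' : ‖g y' - x₀ - G (y' - x₀)‖ ≤ ε * ‖y' - x₀‖) :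
    ‖g y' - y'‖ ≤ ‖G‖ * ‖∑ i ∈ s, a i • (g (zs i) - zs i)‖ + ε * (M * D) + ε * ‖y' - x₀‖ := by
  set w := ∑ i ∈ s, a i • (zs i - x₀)
  set err := ∑ i ∈ s, a i • (g (zs i) - x₀ - G (zs i - x₀))
  obtain ⟨i₀, hi₀⟩ := nonempty_of_sum_ne_zero (hsum.trans_ne one_ne_zero)
  have hD0 : 0 ≤ D := (norm_nonneg _).trans (hD i₀ hi₀)
  have hE : ‖err‖ ≤ M * (ε * D) :=
    (norm_sum_smul_le s a _ fun i hi =>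
      (he i hi).trans (mul_le_mul_of_nonneg_left (hD i hi) hε)).trans (by gcongr)
  have hsplit : g y' - y' =
      G (∑ i ∈ s, a i • (g (zs i) - zs i)) - err + (g y' - x₀ - G (y' - x₀)) := by
    have hy'w : y' - x₀ = G w + err := hy' ▸ sum_smul_sub_eq_linearization hsum
    rw [residual_eq_linearization g G x₀ y', sum_smul_residual_eq_linearization (x₀ := x₀), hy'w,
      map_add, map_add, map_sub]
    abel
  rw [hsplit]
  calc _ ≤ ‖G (∑ i ∈ s, a i • (g (zs i) - zs i))‖ + ‖err‖ + ‖g y' - x₀ - G (y' - x₀)‖ :=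
        (norm_add_le _ _).trans (by gcongr; exact norm_sub_le _ _)
    _ ≤ _ := by gcongr; exact G.le_opNorm _; linarith

variable {m : ℕ} {δ q K p C : ℝ} {y : ℕ → E} {α : ℕ → ℕ → ℝ}

theorem IsAndersonIteration_s12.coeff_bound_nonneg (hy : IsAndersonIteration_s12 g m M y α) : 0 ≤ M :=
  (sum_nonneg fun i _ => abs_nonneg (α 0 i)).trans (hy.sum_abs_coeff_le 0)

theorem IsAndersonIteration_s12.residual_decay_step (hy : IsAndersonIteration_s12 g m M y α)
    (hlin : ∀ z, ‖z - x₀‖ ≤ δ → ‖g z - x₀ - G (z - x₀)‖ ≤ ε * ‖z - x₀‖)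
    (hε : 0 ≤ ε) (hc : 0 < 1 - ‖G‖ - ε) (hq0 : 0 < q) (hq1 : q ≤ 1)
    (hK : M ≤ K * ((1 - ‖G‖ - ε) * q ^ m)) (hcontr : ‖G‖ + 2 * ε * K ≤ q)
    (h0 : K * ‖g (y 0) - y 0‖ ≤ δ) (k : ℕ)
    (hprev : ∀ j ≤ k, ‖y j - x₀‖ ≤ δ ∧ ‖g (y j) - y j‖ ≤ q ^ j * ‖g (y 0) - y 0‖) :
    ‖y (k + 1) - x₀‖ ≤ δ ∧ ‖g (y (k + 1)) - y (k + 1)‖ ≤ q ^ (k + 1) * ‖g (y 0) - y 0‖ := by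
  set R := ‖g (y 0) - y 0‖
  have hM0 := hy.coeff_bound_nonneg
  have hK0 : 0 ≤ K := (mul_nonneg_iff_of_pos_right (by positivity)).1 (hM0.trans hK)
  set D := q ^ k * R / ((1 - ‖G‖ - ε) * q ^ m)
  have hwin : ∀ i ∈ range (min m k + 1), ‖y (k - i) - x₀‖ ≤ δ ∧ ‖y (k - i) - x₀‖ ≤ D := by
    intro i hi
    have hi : i ≤ m ∧ i ≤ k := by simp only [mem_range] at hi; omega
    obtain ⟨hball, hres⟩ := hprev (k - i) (Nat.sub_le k i)
    refine ⟨hball, (le_div_iff₀ (by positivity)).2 ?_⟩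
    calc ‖y (k - i) - x₀‖ * ((1 - ‖G‖ - ε) * q ^ m)
        = q ^ m * ((1 - ‖G‖ - ε) * ‖y (k - i) - x₀‖) := by ring
      _ ≤ q ^ i * (q ^ (k - i) * R) :=
        mul_le_mul (pow_le_pow_of_le_one hq0.le hq1 hi.1)
          ((mul_norm_sub_le_norm_residual (hlin _ hball)).trans hres) (by positivity)
          (by positivity)
      _ = q ^ k * R := by rw [← mul_assoc, ← pow_add, Nat.add_sub_cancel' hi.2]
  have hMD : M * D ≤ K * (q ^ k * R) := by
    rw [mul_div_assoc', div_le_iff₀ (by positivity)]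
    calc M * (q ^ k * R) ≤ K * ((1 - ‖G‖ - ε) * q ^ m) * (q ^ k * R) := by gcongr
      _ = _ := by ring
  have hnear : ‖y (k + 1) - x₀‖ ≤ K * (q ^ k * R) := by
    rw [hy.succ_eq k]
    calc _ ≤ (‖G‖ + ε) * (M * D) := norm_sum_smul_sub_le (hy.sum_coeff k)
          (hy.sum_abs_coeff_le k) hε (fun i hi => (hwin i hi).2)
          (fun i hi => hlin _ (hwin i hi).1)
      _ ≤ M * D := mul_le_of_le_one_left (by positivity) (by linarith)
      _ ≤ _ := hMD
  have hball : ‖y (k + 1) - x₀‖ ≤ δ :=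
    hnear.trans ((mul_le_mul_of_nonneg_left
      (mul_le_of_le_one_left (norm_nonneg _) (pow_le_one₀ hq0.le hq1)) hK0).trans h0)
  refine ⟨hball, ?_⟩
  calc ‖g (y (k + 1)) - y (k + 1)‖
      ≤ ‖G‖ * ‖∑ i ∈ range (min m k + 1), α k i • (g (y (k - i)) - y (k - i))‖
        + ε * (M * D) + ε * ‖y (k + 1) - x₀‖ :=
        norm_residual_sum_smul_le (hy.sum_coeff k) (hy.sum_abs_coeff_le k) hε
          (fun i hi => (hwin i hi).2) (fun i hi => hlin _ (hwin i hi).1)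
          _ (hy.succ_eq k) (hlin _ hball)
    _ ≤ ‖G‖ * (q ^ k * R) + ε * (K * (q ^ k * R)) + ε * (K * (q ^ k * R)) := by
        gcongr
        exact (hy.norm_sum_residual_le k).trans (hprev k le_rfl).2
    _ = (‖G‖ + 2 * ε * K) * (q ^ k * R) := by ring
    _ ≤ q * (q ^ k * R) := by gcongr
    _ = q ^ (k + 1) * R := by ring

theorem IsAndersonIteration_s12.residual_decay (hy : IsAndersonIteration_s12 g m M y α)
    (hlin : ∀ z, ‖z - x₀‖ ≤ δ → ‖g z - x₀ - G (z - x₀)‖ ≤ ε * ‖z - x₀‖)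
    (hε : 0 ≤ ε) (hc : 0 < 1 - ‖G‖ - ε) (hq0 : 0 < q) (hq1 : q ≤ 1)
    (hK : M ≤ K * ((1 - ‖G‖ - ε) * q ^ m)) (hcontr : ‖G‖ + 2 * ε * K ≤ q)
    (h0 : ‖y 0 - x₀‖ ≤ δ) (h0' : K * ‖g (y 0) - y 0‖ ≤ δ) (k : ℕ) :
    ‖y k - x₀‖ ≤ δ ∧ ‖g (y k) - y k‖ ≤ q ^ k * ‖g (y 0) - y 0‖ := by
  induction k using Nat.strong_induction_on with
  | _ k ih =>
    cases k with
    | zero => exact ⟨h0, (one_mul _).ge⟩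
    | succ k =>
      exact hy.residual_decay_step hlin hε hc hq0 hq1 hK hcontr h0' k fun j hj =>
        ih j (Nat.lt_succ_of_le hj)

theorem IsAndersonIteration_s12.norm_sub_le_mul_pow (hy : IsAndersonIteration_s12 g m M y α)
    (hlin : ∀ z, ‖z - x₀‖ ≤ δ → ‖g z - x₀ - G (z - x₀)‖ ≤ ε * ‖z - x₀‖)
    (hε : 0 ≤ ε) (hc : 0 < 1 - ‖G‖ - ε) (hq0 : 0 < q) (hq1 : q ≤ 1)
    (hK : M ≤ K * ((1 - ‖G‖ - ε) * q ^ m)) (hcontr : ‖G‖ + 2 * ε * K ≤ q)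
    (hqp : q ≤ p) (hC : 1 ≤ C) (hfin : (1 + ‖G‖ + ε) * q ≤ C * (1 - ‖G‖ - ε) * p)
    (h0 : ‖y 0 - x₀‖ ≤ δ) (h0' : K * ((1 + ‖G‖ + ε) * ‖y 0 - x₀‖) ≤ δ) :
    ∀ k, ‖y k - x₀‖ ≤ C * p ^ k * ‖y 0 - x₀‖ := by
  have hR := norm_residual_le_mul_norm_sub (hlin _ h0)
  have hK0 : 0 ≤ K :=
    (mul_nonneg_iff_of_pos_right (by positivity)).1 (hy.coeff_bound_nonneg.trans hK)
  have hdecay := hy.residual_decay hlin hε hc hq0 hq1 hK hcontr h0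
    ((mul_le_mul_of_nonneg_left hR hK0).trans h0')
  intro k
  cases k with
  | zero => simpa using mul_le_mul_of_nonneg_right hC (norm_nonneg (y 0 - x₀))
  | succ k =>
    obtain ⟨hball, hres⟩ := hdecay (k + 1)
    have hp0 : 0 ≤ p := hq0.le.trans hqp
    rw [← mul_le_mul_iff_right₀ hc]
    calc (1 - ‖G‖ - ε) * ‖y (k + 1) - x₀‖ ≤ q ^ (k + 1) * ‖g (y 0) - y 0‖ :=
          (mul_norm_sub_le_norm_residual (hlin _ hball)).trans hres
      _ ≤ q ^ (k + 1) * ((1 + ‖G‖ + ε) * ‖y 0 - x₀‖) := by gcongr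
      _ = q ^ k * ((1 + ‖G‖ + ε) * q) * ‖y 0 - x₀‖ := by ring
      _ ≤ p ^ k * (C * (1 - ‖G‖ - ε) * p) * ‖y 0 - x₀‖ := by gcongr
      _ = (1 - ‖G‖ - ε) * (C * p ^ (k + 1) * ‖y 0 - x₀‖) := by ring

-- The plain fixed-point step `y 1 = g (y 0)` is the window-`0` step with coefficient `1`.
theorem isAndersonIteration_of_start (hM : 1 ≤ M) (h1 : y 1 = g (y 0))
    (hrec : ∀ k, 1 ≤ k → y (k + 1) = ∑ i ∈ range (min m k + 1), α k i • g (y (k - i)))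
    (hsum : ∀ k, 1 ≤ k → ∑ i ∈ range (min m k + 1), α k i = 1)
    (habs : ∀ k, 1 ≤ k → ∑ i ∈ range (min m k + 1), |α k i| ≤ M)
    (hopt : ∀ k, 1 ≤ k →
      ‖∑ i ∈ range (min m k + 1), α k i • (g (y (k - i)) - y (k - i))‖ ≤ ‖g (y k) - y k‖) :
    IsAndersonIteration_s12 g m M y (fun k i => if k = 0 then 1 else α k i) := by
  constructor <;> intro k <;> rcases Nat.eq_zero_or_pos k with rfl | hk
  · simp [h1]
  · simpa [hk.ne'] using hrec k hk
  · simp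
  · simpa [hk.ne'] using hsum k hk
  · simpa using hM
  · simpa [hk.ne'] using habs k hk
  · simp
  · simpa [hk.ne'] using hopt k hk

end

theorem stmt_12 (n : ℕ) (g : EuclideanSpace ℝ (Fin n) → EuclideanSpace ℝ (Fin n))
    (ystar : EuclideanSpace ℝ (Fin n))
    (G : EuclideanSpace ℝ (Fin n) →L[ℝ] EuclideanSpace ℝ (Fin n))
    (hderiv : HasFDerivAt g G ystar) (hfix : g ystar = ystar)
    (ρ : ℝ) (hρ : ‖G‖ = ρ) (hρ1 : ρ < 1)
    (m : ℕ) (M : ℝ) (hM : 1 ≤ M) (ρhat : ℝ) (hρhat : ρhat ∈ Set.Ioo ρ 1) :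
    ∃ r > 0, ∀ (y : ℕ → EuclideanSpace ℝ (Fin n)) (α : ℕ → ℕ → ℝ),
      ‖y 0 - ystar‖ < r →
      y 1 = g (y 0) →
      (∀ k, 1 ≤ k →
        y (k + 1) = ∑ i ∈ Finset.range (min m k + 1), α k i • g (y (k - i))) →
      (∀ k, 1 ≤ k → ∑ i ∈ Finset.range (min m k + 1), α k i = 1) →
      (∀ k, 1 ≤ k → ∑ i ∈ Finset.range (min m k + 1), |α k i| ≤ M) →
      (∀ k, 1 ≤ k →
        ‖∑ i ∈ Finset.range (min m k + 1), α k i • (g (y (k - i)) - y (k - i))‖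
          ≤ ‖g (y k) - y k‖) →
      (∀ k, ‖y k - ystar‖ ≤ ((1 + ρ) / (1 - ρ)) * ρhat ^ k * ‖y 0 - ystar‖) ∧
      Filter.limsup
        (fun k : ℕ => (‖y k - ystar‖ / ‖y 0 - ystar‖) ^ ((1 : ℝ) / (k : ℝ)))
        Filter.atTop ≤ ρhat := by
  obtain ⟨hρρhat, hρhat1⟩ := hρhat
  subst hρ
  obtain ⟨ε, hε, K, hK0, hc, hK, hcontr, hfin⟩ :=
    exists_local_convergence_constants (q := (‖G‖ + ρhat) / 2) (p := ρhat) (M := M) m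
      (by linarith) (norm_nonneg G) (by linarith) (by linarith) (by linarith)
  obtain ⟨δ, hδ, hlin⟩ := nhds_basis_closedBall.eventually_iff.1 (hderiv.isLittleO.def hε)
  refine ⟨min δ (δ / (K * (1 + ‖G‖ + ε))), by positivity,
    fun y α h0 h1 hrec hsum habs hopt => ?_⟩
  have h0' : K * ((1 + ‖G‖ + ε) * ‖y 0 - ystar‖) ≤ δ := by
    have := h0.le.trans (min_le_right _ _)
    rw [le_div_iff₀ (by positivity)] at this
    linarith
  have hC : 0 < (1 + ‖G‖) / (1 - ‖G‖) := div_pos (by positivity) (by linarith)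
  have hbound := (isAndersonIteration_of_start hM h1 hrec hsum habs hopt).norm_sub_le_mul_pow
    (fun z hz => by simpa only [hfix] using hlin (mem_closedBall_iff_norm.2 hz)) hε.le hc
    (by linarith [norm_nonneg G]) (by linarith) hK hcontr (by linarith)
    ((one_le_div (by linarith)).2 (by linarith [norm_nonneg G])) hfin
    (h0.le.trans (min_le_left _ _)) h0'
  have hρhat0 : 0 ≤ ρhat := (norm_nonneg G).trans hρρhat.le
  exact ⟨hbound, limsup_rpow_one_div_le_of_le_mul_pow (fun k => by positivity) hC hρhat0
    fun k => div_le_of_le_mul₀ (norm_nonneg _) (mul_nonneg hC.le (pow_nonneg hρhat0 k)) (hbound k)⟩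
end

section
/- Let f : ℝⁿ → ℝ be differentiable, μ-strongly convex and L-smooth, with minimizer x⋆, and let γ ∈ (0, 2/(μ+L)]. Suppose a sequence (x_k) satisfies f(x_{k+1}) ≤ f(x_k) − (γ/2)‖∇f(x_k)‖² for all k. Then ‖x_k − x⋆‖² ≤ (2/μ)·(f(x₀) − f(x⋆))·(1 − γμ)^k for all k; in particular x_k → x⋆ at a linear rate. -/
/-!
Strong convexity at `x` tested against `x⋆` gives the Polyak–Łojasiewicz inequality
`‖∇f(x)‖² ≥ 2μ (f(x) − f(x⋆))`, so each descent step contracts the optimality gap: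
`f(x_{k+1}) − f(x⋆) ≤ (1 − γμ)(f(x_k) − f(x⋆))`, and `γμ ≤ 1` because `γ ≤ 2/(μ+L) ≤ 1/μ`.
Since `∇f(x⋆) = 0`, strong convexity at `x⋆` turns the gap into distance:
`(μ/2)‖x_k − x⋆‖² ≤ f(x_k) − f(x⋆)`.
-/

open InnerProductSpace

section StronglyConvex

variable {E : Type*} [NormedAddCommGroup E] [InnerProductSpace ℝ E]

theorem mul_sub_le_sq_norm_of_strongConvex_ineq {f : E → ℝ} {g x y : E} {μ : ℝ} (hμ : 0 < μ)
    (h : f y ≥ f x + ⟪g, y - x⟫_ℝ + (μ / 2) * ‖y - x‖ ^ 2) :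
    2 * μ * (f x - f y) ≤ ‖g‖ ^ 2 := by
  have hcs : -(‖g‖ * ‖y - x‖) ≤ ⟪g, y - x⟫_ℝ :=
    neg_le_of_abs_le (abs_real_inner_le_norm g (y - x))
  -- minimise `-‖g‖ t + (μ/2) t²` over `t = ‖y - x‖`
  nlinarith [sq_nonneg (μ * ‖y - x‖ - ‖g‖)]

theorem gradient_eq_zero_of_forall_le [CompleteSpace E] {f : E → ℝ} {g a : E}
    (hf : HasGradientAt f g a) (hmin : ∀ x, f a ≤ f x) : g = 0 := by
  have h : toDual ℝ E g = 0 :=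
    IsLocalMin.hasFDerivAt_eq_zero (Filter.Eventually.of_forall hmin) hf.hasFDerivAt
  simpa using h

theorem mul_sq_norm_sub_le_sub_of_forall_le [CompleteSpace E] {f : E → ℝ} {g a y : E} {μ : ℝ}
    (hf : HasGradientAt f g a) (hmin : ∀ x, f a ≤ f x)
    (h : f y ≥ f a + ⟪g, y - a⟫_ℝ + (μ / 2) * ‖y - a‖ ^ 2) :
    (μ / 2) * ‖y - a‖ ^ 2 ≤ f y - f a := by
  rw [gradient_eq_zero_of_forall_le hf hmin, inner_zero_left] at h
  linarith

end StronglyConvex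

theorem mul_le_one_of_le_two_div_add {γ μ L : ℝ} (hμ : 0 < μ) (hμL : μ ≤ L)
    (hγ : γ ≤ 2 / (μ + L)) : γ * μ ≤ 1 := by
  have h : 2 / (μ + L) ≤ 1 / μ := by
    rw [div_le_div_iff₀ (by linarith) hμ]
    linarith
  rw [← le_div_iff₀ hμ]
  linarith

theorem sub_le_one_sub_mul_of_descent {a b c e γ μ : ℝ} (hγ : 0 < γ)
    (hdesc : b ≤ a - (γ / 2) * e) (hPL : 2 * μ * (a - c) ≤ e) :
    b - c ≤ (1 - γ * μ) * (a - c) := by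
  nlinarith

theorem stmt_14_general (n : ℕ) (f : EuclideanSpace ℝ (Fin n) → ℝ)
    (gradf : EuclideanSpace ℝ (Fin n) → EuclideanSpace ℝ (Fin n))
    (hdiff : ∀ x, HasGradientAt f (gradf x) x)
    (μ L : ℝ) (hμ : 0 < μ) (hμL : μ ≤ L)
    (hstrong : ∀ x y, f y ≥ f x + inner (𝕜 := ℝ) (gradf x) (y - x)
      + (μ / 2) * ‖y - x‖ ^ 2)
    (xstar : EuclideanSpace ℝ (Fin n)) (hmin : ∀ x, f xstar ≤ f x)
    (γ : ℝ) (hγ : γ ∈ Set.Ioc 0 (2 / (μ + L)))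
    (x : ℕ → EuclideanSpace ℝ (Fin n))
    (hdesc : ∀ k, f (x (k + 1)) ≤ f (x k) - (γ / 2) * ‖gradf (x k)‖ ^ 2) :
    ∀ k, ‖x k - xstar‖ ^ 2 ≤ (2 / μ) * (f (x 0) - f xstar) * (1 - γ * μ) ^ k := by
  intro k
  have hq : 0 ≤ 1 - γ * μ := sub_nonneg.2 (mul_le_one_of_le_two_div_add hμ hμL hγ.2)
  have hgap : f (x k) - f xstar ≤ (1 - γ * μ) ^ k * (f (x 0) - f xstar) :=
    le_geom (u := fun k ↦ f (x k) - f xstar) hq k fun j _ ↦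
      sub_le_one_sub_mul_of_descent hγ.1 (hdesc j)
        (mul_sub_le_sq_norm_of_strongConvex_ineq hμ (hstrong (x j) xstar))
  have hgrowth : (μ / 2) * ‖x k - xstar‖ ^ 2 ≤ f (x k) - f xstar :=
    mul_sq_norm_sub_le_sub_of_forall_le (hdiff xstar) hmin (hstrong xstar (x k))
  calc ‖x k - xstar‖ ^ 2 ≤ (2 / μ) * (f (x k) - f xstar) := by
        rw [div_mul_eq_mul_div, le_div_iff₀ hμ]; linarith
    _ ≤ (2 / μ) * ((1 - γ * μ) ^ k * (f (x 0) - f xstar)) := by gcongr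
    _ = (2 / μ) * (f (x 0) - f xstar) * (1 - γ * μ) ^ k := by ring

theorem stmt_14 (n : ℕ) (f : EuclideanSpace ℝ (Fin n) → ℝ)
    (gradf : EuclideanSpace ℝ (Fin n) → EuclideanSpace ℝ (Fin n))
    (hdiff : ∀ x, HasGradientAt f (gradf x) x)
    (μ L : ℝ) (hμ : 0 < μ) (hμL : μ ≤ L)
    (hstrong : ∀ x y, f y ≥ f x + inner (𝕜 := ℝ) (gradf x) (y - x)
      + (μ / 2) * ‖y - x‖ ^ 2)
    (hsmooth : ∀ x y, ‖gradf x - gradf y‖ ≤ L * ‖x - y‖)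
    (xstar : EuclideanSpace ℝ (Fin n)) (hmin : ∀ x, f xstar ≤ f x)
    (γ : ℝ) (hγ : γ ∈ Set.Ioc 0 (2 / (μ + L)))
    (x : ℕ → EuclideanSpace ℝ (Fin n))
    (hdesc : ∀ k, f (x (k + 1)) ≤ f (x k) - (γ / 2) * ‖gradf (x k)‖ ^ 2) :
    ∀ k, ‖x k - xstar‖ ^ 2 ≤ (2 / μ) * (f (x 0) - f xstar) * (1 - γ * μ) ^ k :=
  stmt_14_general n f gradf hdiff μ L hμ hμL hstrong xstar hmin γ hγ x hdesc
end
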